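/- arXiv:1205.1773 — 3 statements merged into one kernel-verified Lean document; each statement's English description precedes it below -/
import Mathlib

section
/- Let K be a field of characteristic 0, and let E ⊆ K^2 be a finite set of points such that E is contained in the union of m distinct 'vertical lines' L_1, ..., L_m (lines of the form x = c_i with the c_i distinct), and #(E ∩ L_i) ≤ i for each i = 1,...,m. Then the points of E impose independent conditions on polynomials of degree at most m-1 in K[x,y]: the space of polynomials of total degree ≤ m-1 vanishing on E has dimension binomial(m+1, 2) - #E. -/
/-!
Order the points of `E` by the index of the line they lie on. For a point `x` on the `i`-th line,
multiply the linear forms `X 0 - c j` of the later lines `j > i` with the forms `X 1 - y 1` of the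
other points `y` of `E` on the `i`-th line: since at most `i + 1` points lie there, this has degree
at most `(m - 1 - i) + i = m - 1`. It does not vanish at `x` but vanishes at every other point of
`E` on a line of index `≥ i`. Such a triangular system makes evaluation at `E` surjective on the
polynomials of degree `≤ m - 1`, a space of dimension `C(m + 1, 2)`, and rank–nullity concludes.
-/

open MvPolynomial
open scoped Classical

/-- The space of polynomials in `n` variables of total degree at most `D`
vanishing at every point of `E ⊆ K^n`. -/
noncomputable def vanishSpace (K : Type*) [Field K] (n D : ℕ)
    (E : Set (Fin n → K)) : Submodule K (MvPolynomial (Fin n) K) :=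
  MvPolynomial.restrictTotalDegree (Fin n) K D ⊓
    ⨅ x ∈ E, LinearMap.ker (MvPolynomial.aeval (R := K) x).toLinearMap

theorem MvPolynomial.finrank_restrictTotalDegree (σ K : Type*) [Field K] [Fintype σ] (D : ℕ) :
    Module.finrank K (restrictTotalDegree σ K D) =
      (D + Fintype.card σ).choose (Fintype.card σ) := by
  have hmon : {n : σ →₀ ℕ | (n.sum fun _ e => e) ≤ D} =
      ↑((Finset.range (D + 1)).biUnion fun d => (Finset.univ : Finset σ).finsuppAntidiag d) := by
    ext n
    simp only [Set.mem_ofPred_eq, Finset.coe_biUnion, Finset.coe_range, Set.mem_Iio,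
      Finset.mem_coe, Finset.mem_finsuppAntidiag', Finset.subset_univ, and_true, Set.mem_iUnion,
      exists_prop, exists_eq_right', Nat.lt_succ_iff]
  -- stars and bars counts each layer of degree `d`; the hockey-stick identity sums the layers
  rw [restrictTotalDegree, Module.finrank_eq_nat_card_basis (basisRestrictSupport K _), hmon,
    Nat.card_coe_set_eq, Set.ncard_coe_finset, Finset.card_biUnion, ← Nat.sum_range_multichoose]
  · simp [Finset.card_finsuppAntidiag_nat_eq_multichoose]
  · intro d _ e _ hde
    simp only [Function.onFun, Finset.disjoint_left, Finset.mem_finsuppAntidiag']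
    exact fun n hd he => hde (hd.1.symm.trans he.1)

theorem MvPolynomial.totalDegree_prod_X_sub_C_le {σ ι R : Type*} [CommRing R] [Nontrivial R]
    (s : Finset ι) (i : σ) (a : ι → R) :
    (∏ j ∈ s, (X i - C (a j))).totalDegree ≤ s.card := by
  refine (totalDegree_finsetProd _ _).trans ?_
  simpa using Finset.sum_le_card_nsmul s _ 1 fun j _ =>
    (totalDegree_sub_C_le (X i) (a j)).trans (totalDegree_X (R := R) i).le

theorem Submodule.finrank_inf_ker_of_map_eq_top {K V W : Type*} [Field K] [AddCommGroup V]
    [Module K V] [AddCommGroup W] [Module K W] (p : Submodule K V) [FiniteDimensional K p]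
    (f : V →ₗ[K] W) (hf : p.map f = ⊤) :
    Module.finrank K ↥(p ⊓ LinearMap.ker f) = Module.finrank K p - Module.finrank K W := by
  have hrank := (f.domRestrict p).finrank_range_add_finrank_ker
  rw [LinearMap.range_domRestrict, hf, finrank_top, LinearMap.ker_domRestrict] at hrank
  rw [← map_comap_subtype, finrank_map_subtype_eq]
  omega

theorem linearIndependent_of_triangular {ι R α : Type*} [Fintype ι] [Ring R] [NoZeroDivisors R]
    [LinearOrder α] (r : ι → α) (g : ι → ι → R) (hdiag : ∀ x, g x x ≠ 0)
    (hzero : ∀ x y, x ≠ y → r x ≤ r y → g x y = 0) : LinearIndependent R g := by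
  rw [Fintype.linearIndependent_iff]
  intro a ha
  by_contra! hne
  -- at a coefficient `a y ≠ 0` of maximal rank, the `y`-th coordinate of the relation is
  -- `a y * g y y`
  obtain ⟨y, hy, hmax⟩ := (Finset.univ.filter fun x => a x ≠ 0).exists_max_image r
    (by simpa [Finset.Nonempty] using hne)
  have hay : a y ≠ 0 := (Finset.mem_filter.mp hy).2
  have hsum : ∑ x, a x * g x y = a y * g y y := by
    refine Finset.sum_eq_single y (fun x _ hxy => ?_) (by simp)
    by_cases hax : a x = 0
    · rw [hax, zero_mul]
    · rw [hzero x y hxy (hmax x (by simp [hax])), mul_zero]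
  have h0 : a y * g y y = 0 := by
    simpa [hsum] using congrFun ha y
  exact hay ((mul_eq_zero.mp h0).resolve_right (hdiag y))

theorem Submodule.map_eq_top_of_triangular {ι K V α : Type*} [Fintype ι] [Field K]
    [AddCommGroup V] [Module K V] [LinearOrder α] (p : Submodule K V) (Φ : V →ₗ[K] ι → K)
    (v : ι → V) (hv : ∀ x, v x ∈ p) (r : ι → α) (hdiag : ∀ x, Φ (v x) x ≠ 0)
    (hzero : ∀ x y, x ≠ y → r x ≤ r y → Φ (v x) y = 0) : p.map Φ = ⊤ := by
  have hspan := (linearIndependent_of_triangular r _ hdiag hzero).span_eq_top_of_card_eq_finrank'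
    (Module.finrank_fintype_fun_eq_card K).symm
  rw [eq_top_iff, ← hspan, span_le]
  rintro _ ⟨x, rfl⟩
  exact ⟨v x, hv x, rfl⟩

section Evaluation

variable {K : Type*} [Field K] {n : ℕ}

noncomputable def evalOn (E : Finset (Fin n → K)) : MvPolynomial (Fin n) K →ₗ[K] E → K :=
  LinearMap.pi fun x => (aeval (R := K) x.1).toLinearMap

theorem vanishSpace_eq_inf_ker_evalOn (D : ℕ) (E : Finset (Fin n → K)) :
    vanishSpace K n D E = restrictTotalDegree (Fin n) K D ⊓ LinearMap.ker (evalOn E) := by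
  rw [vanishSpace, evalOn, LinearMap.ker_pi, iInf_subtype']
  rfl

theorem finrank_vanishSpace_of_triangular {α : Type*} [LinearOrder α] (D : ℕ)
    (E : Finset (Fin n → K)) (r : E → α) (f : E → MvPolynomial (Fin n) K)
    (hdeg : ∀ x, (f x).totalDegree ≤ D) (hdiag : ∀ x, eval x.1 (f x) ≠ 0)
    (hzero : ∀ x y, x ≠ y → r x ≤ r y → eval y.1 (f x) = 0) :
    Module.finrank K (vanishSpace K n D E) = (D + n).choose n - E.card := by
  have hsurj : (restrictTotalDegree (Fin n) K D).map (evalOn E) = ⊤ :=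
    Submodule.map_eq_top_of_triangular _ _ f (fun x => (mem_restrictTotalDegree _ _ _).2 (hdeg x))
      r hdiag hzero
  rw [vanishSpace_eq_inf_ker_evalOn, Submodule.finrank_inf_ker_of_map_eq_top _ _ hsurj,
    finrank_restrictTotalDegree, Module.finrank_fintype_fun_eq_card, Fintype.card_fin,
    Fintype.card_coe]

end Evaluation

section VerticalLines

variable {K : Type*} [Field K] {m : ℕ} (c : Fin m → K) (E : Finset (Fin 2 → K))

noncomputable def separatingPoly (i : Fin m) (x : Fin 2 → K) : MvPolynomial (Fin 2) K :=
  (∏ j ∈ Finset.Ioi i, (X 0 - C (c j))) *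
    ∏ y ∈ (E.filter fun y => y 0 = c i).erase x, (X 1 - C (y 1))

theorem eval_separatingPoly (i : Fin m) (x y : Fin 2 → K) :
    eval y (separatingPoly c E i x) =
      (∏ j ∈ Finset.Ioi i, (y 0 - c j)) *
        ∏ z ∈ (E.filter fun z => z 0 = c i).erase x, (y 1 - z 1) := by
  simp [separatingPoly]

variable {c E}

theorem totalDegree_separatingPoly_le {i : Fin m} {x : Fin 2 → K} (hx : x ∈ E) (hxi : x 0 = c i)
    (hcard : (E.filter fun y => y 0 = c i).card ≤ i + 1) :
    (separatingPoly c E i x).totalDegree ≤ m - 1 := by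
  have hline : ((E.filter fun y => y 0 = c i).erase x).card ≤ i := by
    rw [Finset.card_erase_of_mem (Finset.mem_filter.2 ⟨hx, hxi⟩)]
    omega
  calc (separatingPoly c E i x).totalDegree
      ≤ (Finset.Ioi i).card + ((E.filter fun y => y 0 = c i).erase x).card :=
        (totalDegree_mul _ _).trans
          (add_le_add (totalDegree_prod_X_sub_C_le _ _ _) (totalDegree_prod_X_sub_C_le _ _ _))
    _ ≤ m - 1 := by
        rw [Fin.card_Ioi]
        omega

theorem eval_separatingPoly_self_ne_zero (hc : Function.Injective c) {i : Fin m}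
    {x : Fin 2 → K} (hxi : x 0 = c i) : eval x (separatingPoly c E i x) ≠ 0 := by
  rw [eval_separatingPoly, hxi]
  refine mul_ne_zero (Finset.prod_ne_zero_iff.2 fun j hj => ?_)
    (Finset.prod_ne_zero_iff.2 fun z hz => ?_)
  · exact sub_ne_zero.2 (hc.ne (Finset.mem_Ioi.1 hj).ne)
  · obtain ⟨hzx, -, hzi⟩ := by simpa only [Finset.mem_erase, Finset.mem_filter] using hz
    refine sub_ne_zero.2 fun h => hzx (funext (Fin.forall_fin_two.2 ⟨?_, h.symm⟩))
    rw [hzi, hxi]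

theorem eval_separatingPoly_of_lt {i j : Fin m} {x y : Fin 2 → K} (hyj : y 0 = c j)
    (hij : i < j) : eval y (separatingPoly c E i x) = 0 := by
  rw [eval_separatingPoly]
  exact mul_eq_zero_of_left (Finset.prod_eq_zero (Finset.mem_Ioi.2 hij) (sub_eq_zero.2 hyj)) _

theorem eval_separatingPoly_of_ne {i : Fin m} {x y : Fin 2 → K} (hy : y ∈ E) (hyi : y 0 = c i)
    (hyx : y ≠ x) : eval y (separatingPoly c E i x) = 0 := by
  rw [eval_separatingPoly]
  exact mul_eq_zero_of_right _
    (Finset.prod_eq_zero (Finset.mem_erase.2 ⟨hyx, Finset.mem_filter.2 ⟨hy, hyi⟩⟩)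
      (sub_self _))

end VerticalLines

theorem scrambled_rows_impose_independent_conditions_general {K : Type*} [Field K]
    (m : ℕ) (hm : 1 ≤ m) (c : Fin m → K) (hc : Function.Injective c)
    (E : Finset (Fin 2 → K))
    (hEL : ∀ x ∈ E, ∃ i : Fin m, x 0 = c i)
    (hcard : ∀ i : Fin m, (E.filter (fun x => x 0 = c i)).card ≤ (i : ℕ) + 1) :
    Module.finrank K ↥(vanishSpace K 2 (m - 1) (E : Set (Fin 2 → K))) =
      (m + 1).choose 2 - E.card := by
  choose line hline using hEL
  have hrank := finrank_vanishSpace_of_triangular (m - 1) E (fun x => line x.1 x.2)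
    (fun x => separatingPoly c E (line x.1 x.2) x.1)
    (fun x => totalDegree_separatingPoly_le x.2 (hline _ x.2) (hcard _))
    (fun x => eval_separatingPoly_self_ne_zero hc (hline _ x.2))
    (fun x y hxy hle => hle.lt_or_eq.elim
      (fun hlt => eval_separatingPoly_of_lt (hline _ y.2) hlt)
      (fun heq => eval_separatingPoly_of_ne y.2 (heq ▸ hline _ y.2)
        (Subtype.coe_injective.ne hxy.symm)))
  rwa [show m - 1 + 2 = m + 1 by omega] at hrank

/-- Proposition ("af", condition "yes", affine version): if a finite set `E ⊆ K^2` lies on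
`m` distinct vertical lines `x = c_i` with at most `i` points of `E` on the `i`-th line,
then `E` imposes independent conditions on polynomials of degree at most `m-1`:
the vanishing space has dimension `C(m+1,2) - #E`. -/
theorem scrambled_rows_impose_independent_conditions {K : Type*} [Field K] [CharZero K]
    (m : ℕ) (hm : 1 ≤ m) (c : Fin m → K) (hc : Function.Injective c)
    (E : Finset (Fin 2 → K))
    (hEL : ∀ x ∈ E, ∃ i : Fin m, x 0 = c i)
    (hcard : ∀ i : Fin m, (E.filter (fun x => x 0 = c i)).card ≤ (i : ℕ) + 1) :
    Module.finrank K ↥(vanishSpace K 2 (m - 1) (E : Set (Fin 2 → K))) =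
      (m + 1).choose 2 - E.card :=
  scrambled_rows_impose_independent_conditions_general m hm c hc E hEL hcard
end

section
/- Let K be a field of characteristic 0, E ⊆ K^2 finite, m ≥ 1, and suppose there exist k < m distinct parallel lines R_1, ..., R_k in K^2 such that #(E ∩ (R_1 ∪ ... ∪ R_k)) > binomial(m+1, 2) - binomial(m+1-k, 2). Then E fails to impose independent conditions on polynomials of degree at most m-1: the space of polynomials of total degree ≤ m-1 vanishing on E has dimension strictly greater than max(binomial(m+1,2) - #E, 0), assuming #E ≤ binomial(m+1,2). -/
open MvPolynomial
open scoped Classical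

/-! If the points of `E₁ ⊆ E` lie on the parallel lines `ℓ_j = 0`, `j < k`, multiplication by
`∏ ℓ_j` embeds the polynomials of degree `≤ m - 1 - k`, a space of dimension `C(m+1-k, 2)`, into
the polynomials of degree `≤ m - 1` vanishing on `E₁`. Each of the remaining `#E - #E₁` points
imposes at most one further linear condition, so the vanishing space of `E` has dimension at least
`C(m+1-k, 2) - #E + #E₁ > C(m+1, 2) - #E`. -/

open Module

section RankNullity

variable {K M W : Type*} [Field K] [AddCommGroup M] [Module K M] [AddCommGroup W] [Module K W]

theorem Submodule.finrank_le_finrank_inf_ker_add (S : Submodule K M) [FiniteDimensional K S]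
    [FiniteDimensional K W] (f : M →ₗ[K] W) :
    finrank K S ≤ finrank K ↥(S ⊓ LinearMap.ker f) + finrank K W := by
  have hker : finrank K ↥(LinearMap.ker (f ∘ₗ S.subtype)) = finrank K ↥(S ⊓ LinearMap.ker f) := by
    rw [LinearMap.ker_comp, ← Submodule.map_comap_subtype, Submodule.finrank_map_subtype_eq]
  have := (f ∘ₗ S.subtype).finrank_range_add_finrank_ker
  have := Submodule.finrank_le (LinearMap.range (f ∘ₗ S.subtype))
  omega

end RankNullity

namespace MvPolynomial

variable {σ K : Type*} [Fintype σ] [Field K]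

theorem finrank_restrictTotalDegree_s8 (D : ℕ) :
    finrank K (restrictTotalDegree σ K D) = (D + Fintype.card σ).choose (Fintype.card σ) := by
  have hset : {s : σ →₀ ℕ | (s.sum fun _ e => e) ≤ D} =
      ↑((Finset.range (D + 1)).biUnion fun t => (Finset.univ : Finset σ).finsuppAntidiag t) := by
    ext s
    simp [Finsupp.sum_fintype]
  have hdisj : (↑(Finset.range (D + 1)) : Set ℕ).PairwiseDisjoint
      fun t => (Finset.univ : Finset σ).finsuppAntidiag t := by
    intro t _ u _ htu
    simp only [Function.onFun]
    rw [Finset.disjoint_left]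
    intro s hs hu
    simp only [Finset.mem_finsuppAntidiag] at hs hu
    exact htu (hs.1.symm.trans hu.1)
  rw [restrictTotalDegree, finrank_eq_nat_card_basis (basisRestrictSupport K _), hset,
    Nat.card_coe_set_eq, Set.ncard_coe_finset, Finset.card_biUnion hdisj]
  simp only [Finset.card_finsuppAntidiag_nat_eq_multichoose, Finset.card_univ]
  exact Nat.sum_range_multichoose D _

noncomputable def affineForm (a : σ → K) (c : K) : MvPolynomial σ K :=
  ∑ i, C (a i) * X i - C c

@[simp]
theorem aeval_affineForm (a : σ → K) (c : K) (x : σ → K) :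
    aeval x (affineForm a c) = ∑ i, a i * x i - c := by
  simp [affineForm]

theorem totalDegree_affineForm_le (a : σ → K) (c : K) : (affineForm a c).totalDegree ≤ 1 := by
  refine (totalDegree_sub _ _).trans (max_le ((totalDegree_finsetSum _ _).trans ?_) ?_)
  · exact Finset.sup_le fun i _ => (totalDegree_mul _ _).trans (by simp)
  · simp

theorem affineForm_ne_zero [DecidableEq σ] {a : σ → K} (ha : a ≠ 0) (c : K) :
    affineForm a c ≠ 0 := by
  obtain ⟨i, hi⟩ := Function.ne_iff.mp ha
  intro h
  have hzero (x : σ → K) : ∑ j, a j * x j - c = 0 := by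
    simpa using congrArg (aeval x) h
  have hc : c = 0 := by simpa using hzero 0
  exact hi (by simpa [hc, Pi.single_apply] using hzero (Pi.single i 1))

end MvPolynomial

section VanishSpace

variable {K : Type*} [Field K] {n : ℕ}

instance (D : ℕ) (E : Set (Fin n → K)) : FiniteDimensional K (vanishSpace K n D E) :=
  Submodule.finiteDimensional_of_le inf_le_left

theorem vanishSpace_union (D : ℕ) (A B : Set (Fin n → K)) :
    vanishSpace K n D (A ∪ B) =
      vanishSpace K n D A ⊓ ⨅ x ∈ B, LinearMap.ker (aeval (R := K) x).toLinearMap := by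
  rw [vanishSpace, vanishSpace, iInf_union, inf_assoc]

theorem finrank_vanishSpace_le_finrank_vanishSpace_union_add_card (D : ℕ)
    (A : Set (Fin n → K)) (B : Finset (Fin n → K)) :
    finrank K (vanishSpace K n D A) ≤ finrank K (vanishSpace K n D (A ∪ B)) + B.card := by
  have hker : ⨅ x ∈ (B : Set (Fin n → K)), LinearMap.ker (aeval (R := K) x).toLinearMap =
      LinearMap.ker (LinearMap.pi fun x : B => (aeval (R := K) (x : Fin n → K)).toLinearMap) := by
    rw [LinearMap.ker_pi, iInf_subtype']
    rfl
  have := (vanishSpace K n D A).finrank_le_finrank_inf_ker_add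
    (LinearMap.pi fun x : B => (aeval (R := K) (x : Fin n → K)).toLinearMap)
  rw [vanishSpace_union, hker]
  simpa using this

theorem finrank_restrictTotalDegree_le_finrank_vanishSpace {P : MvPolynomial (Fin n) K}
    (hP : P ≠ 0) {k : ℕ} (hPdeg : P.totalDegree ≤ k) {E : Set (Fin n → K)}
    (hPE : ∀ x ∈ E, aeval x P = 0) (D : ℕ) :
    finrank K (restrictTotalDegree (Fin n) K D) ≤ finrank K (vanishSpace K n (D + k) E) := by
  have hmaps : ∀ q ∈ restrictTotalDegree (Fin n) K D,
      LinearMap.mulLeft K P q ∈ vanishSpace K n (D + k) E := by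
    intro q hq
    rw [mem_restrictTotalDegree] at hq
    refine ⟨(mem_restrictTotalDegree _ _ _).mpr ((totalDegree_mul _ _).trans (by omega)), ?_⟩
    simp only [SetLike.mem_coe, Submodule.mem_iInf, LinearMap.mem_ker, AlgHom.toLinearMap_apply,
      LinearMap.mulLeft_apply, map_mul]
    intro x hx
    rw [hPE x hx, zero_mul]
  refine LinearMap.finrank_le_finrank_of_injective
    (f := (LinearMap.mulLeft K P).restrict hmaps) fun q r hqr => ?_
  exact Subtype.ext (mul_left_cancel₀ hP (congrArg Subtype.val hqr))

theorem finrank_restrictTotalDegree_le_finrank_vanishSpace_of_parallel_hyperplanes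
    {ι : Type*} [Fintype ι] {a : Fin n → K} (ha : a ≠ 0) (c : ι → K) {E : Set (Fin n → K)}
    (hE : ∀ x ∈ E, ∃ j, ∑ i, a i * x i = c j) (D : ℕ) :
    finrank K (restrictTotalDegree (Fin n) K D) ≤
      finrank K (vanishSpace K n (D + Fintype.card ι) E) := by
  refine finrank_restrictTotalDegree_le_finrank_vanishSpace (P := ∏ j, affineForm a (c j))
    (Finset.prod_ne_zero_iff.mpr fun j _ => affineForm_ne_zero ha (c j)) ?_ ?_ D
  · refine (totalDegree_finsetProd _ _).trans ?_
    exact (Finset.sum_le_sum fun j _ => totalDegree_affineForm_le a (c j)).trans_eq (by simp)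
  · intro x hx
    obtain ⟨j, hj⟩ := hE x hx
    rw [map_prod]
    exact Finset.prod_eq_zero (Finset.mem_univ j) (by rw [aeval_affineForm, hj, sub_self])

end VanishSpace

theorem too_many_points_on_parallel_lines_special_general {K : Type*} [Field K]
    (m k : ℕ) (hk : k < m)
    (α β : K) (hαβ : α ≠ 0 ∨ β ≠ 0)
    (c : Fin k → K)
    (E : Finset (Fin 2 → K)) (hEcard : E.card ≤ (m + 1).choose 2)
    (hbig : (m + 1).choose 2 - (m + 1 - k).choose 2 <
      (E.filter (fun x => ∃ i : Fin k, α * x 0 + β * x 1 = c i)).card) :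
    (m + 1).choose 2 - E.card <
      Module.finrank K ↥(vanishSpace K 2 (m - 1) (E : Set (Fin 2 → K))) := by
  set E₁ := E.filter fun x => ∃ i : Fin k, α * x 0 + β * x 1 = c i
  have ha : (![α, β] : Fin 2 → K) ≠ 0 := by
    simpa [funext_iff, Fin.forall_fin_two, ← not_and_or] using hαβ
  have hE₁ : ∀ x ∈ (E₁ : Set (Fin 2 → K)), ∃ j, ∑ i, (![α, β] : Fin 2 → K) i * x i = c j := by
    intro x hx
    simpa [E₁, Fin.sum_univ_two] using (Finset.mem_filter.mp hx).2
  have hlow := finrank_restrictTotalDegree_le_finrank_vanishSpace_of_parallel_hyperplanes (n := 2)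
    ha c hE₁ (m - 1 - k)
  have hdrop := finrank_vanishSpace_le_finrank_vanishSpace_union_add_card (m - 1) E₁ (E \ E₁)
  have hsub : E₁ ⊆ E := Finset.filter_subset _ _
  rw [finrank_restrictTotalDegree_s8, Fintype.card_fin, Fintype.card_fin,
    show m - 1 - k + 2 = m + 1 - k by omega, show m - 1 - k + k = m - 1 by omega] at hlow
  rw [← Finset.coe_union, Finset.union_sdiff_of_subset hsub, Finset.card_sdiff_of_subset hsub]
    at hdrop
  have := Finset.card_le_card hsub
  omega

/-- Proposition ("af", condition "no", affine version): if `#E ≤ C(m+1,2)` and more than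
`C(m+1,2) - C(m+1-k,2)` points of `E` lie on a union of `k < m` distinct parallel lines
`{α x + β y = c_i}`, then `E` fails to impose independent conditions on polynomials of
degree at most `m-1`: the vanishing space has dimension strictly greater than
`C(m+1,2) - #E`. -/
theorem too_many_points_on_parallel_lines_special {K : Type*} [Field K] [CharZero K]
    (m k : ℕ) (hm : 1 ≤ m) (hk : k < m)
    (α β : K) (hαβ : α ≠ 0 ∨ β ≠ 0)
    (c : Fin k → K) (hc : Function.Injective c)
    (E : Finset (Fin 2 → K)) (hEcard : E.card ≤ (m + 1).choose 2)
    (hbig : (m + 1).choose 2 - (m + 1 - k).choose 2 <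
      (E.filter (fun x => ∃ i : Fin k, α * x 0 + β * x 1 = c i)).card) :
    (m + 1).choose 2 - E.card <
      Module.finrank K ↥(vanishSpace K 2 (m - 1) (E : Set (Fin 2 → K))) :=
  too_many_points_on_parallel_lines_special_general m k hk α β hαβ c E hEcard hbig
end

section
/- Let K be a field of characteristic 0, n ≥ 2, m ≥ 1, and let H_1, ..., H_m be m distinct parallel affine hyperplanes in K^n. Suppose E ⊆ H_1 ∪ ... ∪ H_m is a finite set with #(E ∩ H_i) ≤ binomial(m-i+n-2, n-2) for all i, and suppose for each i the points E ∩ H_i impose independent conditions on polynomials of degree ≤ m-i on H_i (i.e., the space of degree-≤(m-i) polynomials on H_i ≅ K^{n-1} vanishing on E ∩ H_i has codimension #(E ∩ H_i)). Then E imposes independent conditions on polynomials of degree at most m-1 in K[x_1,...,x_n]: the space of such polynomials vanishing on E has dimension binomial(m+n-1, n) - #E. -/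
/-!
By rank–nullity, `E` imposes independent conditions in degree `≤ D` exactly when every function
on `E` is the restriction of a polynomial of degree `≤ D`. Such interpolants are built layer by
layer, Newton-style: if `p` interpolates `f` on the hyperplanes `ℓ = c j`, `j < i`, add
`G * ∏ j < i, (ℓ - c j)`, which vanishes on those hyperplanes and is a nonzero constant on
`ℓ = c i`, where `G` of degree `≤ m - 1 - i` interpolates the rescaled error `f - p` on `E ∩ H_i`.
On `H_i ≅ K^(n-1)` such a `G` exists by hypothesis, and it is transported to `K^n` by composing
with an affine left inverse of the parametrisation, which does not raise the degree.
-/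

open MvPolynomial
open scoped Classical

noncomputable def degreeLeEquivDegreeEq (N D : ℕ) :
    {s : Fin N →₀ ℕ // s.degree ≤ D} ≃ {t : Fin (N + 1) →₀ ℕ // t.degree = D} where
  toFun s := ⟨Finsupp.cons (D - s.1.degree) s.1, by
    have := s.2
    simp only [Finsupp.degree_eq_sum, Fin.sum_univ_succ, Finsupp.cons_zero,
      Finsupp.cons_succ] at *
    omega⟩
  invFun t := ⟨t.1.tail, by
    have := t.2
    simp only [Finsupp.degree_eq_sum, Fin.sum_univ_succ, Finsupp.tail_apply] at *
    omega⟩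
  left_inv s := by simp
  right_inv := by
    rintro ⟨t, rfl⟩
    ext1
    change Finsupp.cons (t.degree - t.tail.degree) t.tail = t
    conv_rhs => rw [← Finsupp.cons_tail t]
    congr 1
    simp only [Finsupp.degree_eq_sum, Fin.sum_univ_succ, Finsupp.tail_apply]
    omega

theorem finrank_restrictTotalDegree (R : Type*) [CommRing R] [Nontrivial R] (N D : ℕ) :
    Module.finrank R (restrictTotalDegree (Fin N) R D) = (D + N).choose N := by
  rw [restrictTotalDegree, Module.finrank_eq_nat_card_basis (basisRestrictSupport R _)]
  change Nat.card {s : Fin N →₀ ℕ // s.degree ≤ D} = _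
  rw [Nat.card_congr ((degreeLeEquivDegreeEq N D).trans (Sym.equivNatSum (Fin (N + 1)) D).symm),
    Sym.natCard_sym_eq_choose, Nat.card_fin, Nat.add_right_comm, Nat.add_sub_cancel,
    Nat.add_comm N D, Nat.choose_symm_add]

theorem totalDegree_bind₁_le {R σ ι : Type*} [CommSemiring R] {P : ι → MvPolynomial σ R}
    {d : ℕ} (hP : ∀ i, (P i).totalDegree ≤ d) (g : MvPolynomial ι R) :
    (bind₁ P g).totalDegree ≤ g.totalDegree * d := by
  conv_lhs => rw [g.as_sum, map_sum]
  refine totalDegree_finsetSum_le fun s hs => ?_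
  rw [bind₁_monomial]
  refine (totalDegree_mul _ _).trans ?_
  rw [totalDegree_C, zero_add]
  refine (totalDegree_finsetProd _ _).trans ?_
  calc ∑ i ∈ s.support, (P i ^ s i).totalDegree ≤ ∑ i ∈ s.support, s i * d :=
        Finset.sum_le_sum fun i _ => (totalDegree_pow _ _).trans (Nat.mul_le_mul_left _ (hP i))
    _ = (s.sum fun _ e => e) * d := (Finset.sum_mul _ _ _).symm
    _ ≤ g.totalDegree * d := Nat.mul_le_mul_right _ (le_totalDegree hs)

theorem finrank_fun_eq_ncard {K σ : Type*} [Field K] {S : Set σ} (hS : S.Finite) :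
    Module.finrank K (S → K) = S.ncard := by
  have := hS.fintype
  rw [Module.finrank_fintype_fun_eq_card, ← Nat.card_eq_fintype_card, Nat.card_coe_set_eq]

section Interpolation

variable {K σ ι : Type*} [Field K]

def AdmitsInterpolation (D : ℕ) (S : Set (σ → K)) : Prop :=
  ∀ f : (σ → K) → K, ∃ p : MvPolynomial σ K, p.totalDegree ≤ D ∧ ∀ x ∈ S, eval x p = f x

noncomputable def restrictTotalDegreeEval (D : ℕ) (S : Set (σ → K)) :
    restrictTotalDegree σ K D →ₗ[K] (S → K) :=
  LinearMap.pi fun x => (aeval (x : σ → K)).toLinearMap ∘ₗ (restrictTotalDegree σ K D).subtype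

@[simp]
theorem restrictTotalDegreeEval_apply (D : ℕ) (S : Set (σ → K)) (p : restrictTotalDegree σ K D)
    (x : S) : restrictTotalDegreeEval D S p x = eval (x : σ → K) p := rfl

theorem range_restrictTotalDegreeEval_eq_top_iff {D : ℕ} {S : Set (σ → K)} :
    LinearMap.range (restrictTotalDegreeEval D S) = ⊤ ↔ AdmitsInterpolation D S := by
  rw [LinearMap.range_eq_top]
  constructor
  · intro h f
    obtain ⟨p, hp⟩ := h fun x => f x
    exact ⟨p, (mem_restrictTotalDegree _ _ _).mp p.2, fun x hx => congrFun hp ⟨x, hx⟩⟩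
  · intro h g
    obtain ⟨p, hpD, hp⟩ := h fun x => if hx : x ∈ S then g ⟨x, hx⟩ else 0
    refine ⟨⟨p, (mem_restrictTotalDegree _ _ _).mpr hpD⟩, funext fun x => ?_⟩
    simp [hp x x.2]

theorem finrank_range_restrictTotalDegreeEval_add_finrank_vanishSpace (n D : ℕ)
    (S : Set (Fin n → K)) :
    Module.finrank K (LinearMap.range (restrictTotalDegreeEval D S)) +
      Module.finrank K (vanishSpace K n D S) = (D + n).choose n := by
  have hker : LinearMap.ker (restrictTotalDegreeEval D S) =
      (vanishSpace K n D S).comap (restrictTotalDegree (Fin n) K D).subtype := by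
    ext p
    simp [restrictTotalDegreeEval, vanishSpace, funext_iff]
  rw [← finrank_restrictTotalDegree K n D,
    ← LinearMap.finrank_range_add_finrank_ker (restrictTotalDegreeEval D S), hker]
  exact congrArg _ (Submodule.comapSubtypeEquivOfLe inf_le_left).finrank_eq.symm

theorem finrank_vanishSpace_of_admitsInterpolation {n D : ℕ} {S : Set (Fin n → K)}
    (hS : S.Finite) (h : AdmitsInterpolation D S) :
    Module.finrank K (vanishSpace K n D S) = (D + n).choose n - S.ncard := by
  have := finrank_range_restrictTotalDegreeEval_add_finrank_vanishSpace n D S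
  rw [range_restrictTotalDegreeEval_eq_top_iff.mpr h, finrank_top, finrank_fun_eq_ncard hS] at this
  omega

theorem admitsInterpolation_of_finrank_vanishSpace {n D : ℕ} {S : Set (Fin n → K)}
    (hS : S.Finite) (hcard : S.ncard ≤ (D + n).choose n)
    (h : Module.finrank K (vanishSpace K n D S) = (D + n).choose n - S.ncard) :
    AdmitsInterpolation D S := by
  have := finrank_range_restrictTotalDegreeEval_add_finrank_vanishSpace n D S
  rw [← range_restrictTotalDegreeEval_eq_top_iff]
  have := hS.to_subtype
  apply Submodule.eq_top_of_finrank_eq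
  rw [finrank_fun_eq_ncard hS]
  omega

section Affine

variable [Fintype σ]

theorem exists_totalDegree_le_one_eval_eq (a : (σ → K) →ᵃ[K] K) :
    ∃ P : MvPolynomial σ K, P.totalDegree ≤ 1 ∧ ∀ x, eval x P = a x := by
  refine ⟨∑ k, C (a.linear (Pi.single k 1)) * X k + C (a 0), ?_, fun x => ?_⟩
  · refine (totalDegree_add _ _).trans (max_le ?_ (by simp))
    exact totalDegree_finsetSum_le fun k _ => (totalDegree_mul _ _).trans (by simp)
  · have hsingle (k : σ) : (Pi.single k 1 : σ → K) = fun j => if k = j then 1 else 0 := by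
      ext j
      simp [Pi.single_apply, eq_comm]
    rw [show a x = a.linear x + a 0 from congrFun a.decomp x,
      LinearMap.pi_apply_eq_sum_univ a.linear x]
    simp [hsingle, mul_comm]

theorem exists_totalDegree_le_eval_eq_eval_comp (ψ : (σ → K) →ᵃ[K] (ι → K))
    (g : MvPolynomial ι K) :
    ∃ G : MvPolynomial σ K, G.totalDegree ≤ g.totalDegree ∧ ∀ x, eval x G = eval (ψ x) g := by
  choose P hPdeg hPeval using
    fun i => exists_totalDegree_le_one_eval_eq ((AffineMap.proj i).comp ψ)
  refine ⟨bind₁ P g, (totalDegree_bind₁_le hPdeg g).trans (mul_one _).le, fun x => ?_⟩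
  calc eval x (bind₁ P g) = eval (fun i => eval x (P i)) g := eval₂Hom_bind₁ _ _ _ _
    _ = eval (ψ x) g := by simp [hPeval]

theorem AdmitsInterpolation.of_preimage {D : ℕ} {φ : (ι → K) →ᵃ[K] (σ → K)}
    (hφ : Function.Injective φ) {T : Set (σ → K)} (hT : T ⊆ Set.range φ)
    (h : AdmitsInterpolation D (φ ⁻¹' T)) : AdmitsInterpolation D T := by
  have hker : LinearMap.ker φ.linear = ⊥ := by
    rwa [LinearMap.ker_eq_bot, φ.linear_injective_iff]
  obtain ⟨ψ, hψ⟩ := LinearMap.exists_leftInverse_of_injective _ hker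
  let ψ' : (σ → K) →ᵃ[K] (ι → K) := ψ.toAffineMap - AffineMap.const K _ (ψ (φ 0))
  have hψ' (y : ι → K) : ψ' (φ y) = y := by
    have hφy : φ y = φ.linear y + φ 0 := congrFun φ.decomp y
    simpa [ψ', hφy] using LinearMap.congr_fun hψ y
  intro f
  obtain ⟨g, hg, hgT⟩ := h (f ∘ φ)
  obtain ⟨G, hG, hGg⟩ := exists_totalDegree_le_eval_eq_eval_comp ψ' g
  refine ⟨G, hG.trans hg, ?_⟩
  rintro _ hx
  obtain ⟨y, rfl⟩ := hT hx
  rw [hGg, hψ', hgT y hx, Function.comp_apply]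

theorem exists_totalDegree_le_eval_eq_prod_sub {κ : Type*} (ℓ : (σ → K) →ₗ[K] K) (c : κ → K)
    (s : Finset κ) :
    ∃ Q : MvPolynomial σ K, Q.totalDegree ≤ s.card ∧ ∀ x, eval x Q = ∏ j ∈ s, (ℓ x - c j) := by
  obtain ⟨P, hPdeg, hPeval⟩ := exists_totalDegree_le_one_eval_eq ℓ.toAffineMap
  refine ⟨∏ j ∈ s, (P - C (c j)), ?_, fun x => by simp [hPeval]⟩
  refine (totalDegree_finsetProd _ _).trans ?_
  simpa using Finset.sum_le_sum fun j (_ : j ∈ s) => (totalDegree_sub_C_le P (c j)).trans hPdeg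

end Affine

theorem AdmitsInterpolation.union {D e : ℕ} {A B : Set (σ → K)} (hA : AdmitsInterpolation D A)
    (hB : AdmitsInterpolation (D - e) B) (he : e ≤ D) (Q : MvPolynomial σ K)
    (hQ : Q.totalDegree ≤ e) (hQA : ∀ x ∈ A, eval x Q = 0) (hQB : ∀ x ∈ B, eval x Q ≠ 0) :
    AdmitsInterpolation D (A ∪ B) := by
  intro f
  obtain ⟨p, hp, hpA⟩ := hA f
  obtain ⟨g, hg, hgB⟩ := hB fun x => (f x - eval x p) / eval x Q
  refine ⟨p + g * Q, ?_, ?_⟩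
  · have hgQ : (g * Q).totalDegree ≤ D := (totalDegree_mul g Q).trans (by omega)
    exact (totalDegree_add p _).trans (max_le hp hgQ)
  · rintro x (hx | hx)
    · simp [hpA x hx, hQA x hx]
    · simp [hgB x hx, div_mul_cancel₀ _ (hQB x hx)]

theorem admitsInterpolation_of_parallel_layers [Fintype σ] (ℓ : (σ → K) →ₗ[K] K) {m D : ℕ}
    (hmD : m ≤ D + 1) (c : Fin m → K) (hc : Function.Injective c) (E : Set (σ → K))
    (h : ∀ i : Fin m, AdmitsInterpolation (D - i) {x | x ∈ E ∧ ℓ x = c i}) :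
    AdmitsInterpolation D {x | x ∈ E ∧ ∃ i, ℓ x = c i} := by
  suffices ∀ k ≤ m, AdmitsInterpolation D {x | x ∈ E ∧ ∃ i : Fin m, i < k ∧ ℓ x = c i} by
    simpa using this m le_rfl
  intro k
  induction k with
  | zero => exact fun _ f => ⟨0, by simp, by simp⟩
  | succ k ih =>
    intro hk
    let i : Fin m := ⟨k, hk⟩
    have hsplit : {x | x ∈ E ∧ ∃ j : Fin m, j < k + 1 ∧ ℓ x = c j} =
        {x | x ∈ E ∧ ∃ j : Fin m, j < k ∧ ℓ x = c j} ∪ {x | x ∈ E ∧ ℓ x = c i} := by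
      have hi (j : Fin m) : (j : ℕ) = k ↔ j = i := by simp [i, Fin.ext_iff]
      ext x
      simp only [Set.mem_ofPred_eq, Set.mem_union, Nat.lt_succ_iff_lt_or_eq, or_and_right,
        exists_or, ← and_or_left, hi, exists_eq_left]
    obtain ⟨Q, hQdeg, hQeval⟩ := exists_totalDegree_le_eval_eq_prod_sub ℓ c (Finset.Iio i)
    rw [hsplit]
    refine (ih (by omega)).union (h i) (by omega) Q (by simpa using hQdeg) ?_ ?_
    · rintro x ⟨-, j, hj, hx⟩
      rw [hQeval]
      exact Finset.prod_eq_zero (Finset.mem_Iio.mpr hj) (by rw [hx, sub_self])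
    · rintro x ⟨-, hx⟩
      rw [hQeval, hx, Finset.prod_ne_zero_iff]
      exact fun j hj => sub_ne_zero.mpr (hc.ne (Finset.mem_Iio.mp hj).ne')

end Interpolation

theorem parallel_hyperplanes_impose_independent_conditions_general {K : Type*} [Field K]
    (n m : ℕ) (hn : 2 ≤ n) (hm : 1 ≤ m)
    (ℓ : ((Fin n → K) →ₗ[K] K))
    (c : Fin m → K) (hc : Function.Injective c)
    (φ : Fin m → ((Fin (n - 1) → K) →ᵃ[K] (Fin n → K)))
    (hφinj : ∀ i, Function.Injective (φ i))
    (hφmem : ∀ i y, ℓ (φ i y) = c i)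
    (hφsurj : ∀ i x, ℓ x = c i → ∃ y, φ i y = x)
    (E : Finset (Fin n → K))
    (hE : ∀ x ∈ E, ∃ i : Fin m, ℓ x = c i)
    (hcard : ∀ i : Fin m, (E.filter (fun x => ℓ x = c i)).card ≤
      (m - ((i : ℕ) + 1) + n - 2).choose (n - 2))
    (hind : ∀ i : Fin m,
      Module.finrank K ↥(vanishSpace K (n - 1) (m - ((i : ℕ) + 1))
          {y : Fin (n - 1) → K | φ i y ∈ E}) =
        (m - ((i : ℕ) + 1) + n - 1).choose (n - 1) -
          (E.filter (fun x => ℓ x = c i)).card) :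
    Module.finrank K ↥(vanishSpace K n (m - 1) (E : Set (Fin n → K))) =
      (m + n - 1).choose n - E.card := by
  have hlayer (i : Fin m) : AdmitsInterpolation (m - 1 - i) {x | x ∈ E ∧ ℓ x = c i} := by
    set T : Set (Fin n → K) := {x | x ∈ E ∧ ℓ x = c i}
    have hTφ : T ⊆ Set.range (φ i) := fun x hx => hφsurj i x hx.2
    have hpre : {y | φ i y ∈ E} = φ i ⁻¹' T := by ext y; simp [T, hφmem]
    have hcardT : (φ i ⁻¹' T).ncard = (E.filter fun x => ℓ x = c i).card := by
      rw [Set.ncard_preimage_of_injective_subset_range (hφinj i) hTφ, ← Set.ncard_coe_finset,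
        Finset.coe_filter]
    have hdeg : m - 1 - i + (n - 1) = m - (i + 1) + n - 1 := by omega
    have hchoose :
        (m - (i + 1) + n - 2).choose (n - 2) ≤ (m - (i + 1) + n - 1).choose (n - 1) := by
      rw [show m - (i + 1) + n - 1 = m - (i + 1) + n - 2 + 1 by omega,
        show n - 1 = n - 2 + 1 by omega, Nat.choose_succ_succ]
      exact Nat.le_add_right _ _
    refine .of_preimage (hφinj i) hTφ (admitsInterpolation_of_finrank_vanishSpace ?_ ?_ ?_)
    · exact (E.finite_toSet.subset fun x hx => hx.1).preimage (hφinj i).injOn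
    · rw [hcardT, hdeg]
      exact (hcard i).trans hchoose
    · rw [hcardT, hdeg, ← hpre, show m - 1 - (i : ℕ) = m - (i + 1) by omega]
      exact hind i
  have hEcover : {x | x ∈ (E : Set (Fin n → K)) ∧ ∃ i, ℓ x = c i} = E :=
    Set.sep_eq_self_iff_mem_true.mpr hE
  have hinterp := admitsInterpolation_of_parallel_layers ℓ (by omega) c hc _ hlayer
  rw [hEcover] at hinterp
  rw [finrank_vanishSpace_of_admitsInterpolation E.finite_toSet hinterp, Set.ncard_coe_finset,
    show m - 1 + n = m + n - 1 by omega]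

/-- Lemma ("anynaf", condition 2, affine version): let `H_1, …, H_m` be distinct parallel
affine hyperplanes in `K^n` (cut out by `ℓ(x) = c_i` for a nonzero linear form `ℓ`), each
parametrized by an injective affine map `φ i : K^{n-1} → K^n` with image `H_i`. If
`E ⊆ H_1 ∪ ⋯ ∪ H_m` is finite with `#(E ∩ H_i) ≤ C(m-i+n-2, n-2)`, and for each `i` the
points of `E ∩ H_i` impose independent conditions on polynomials of degree `≤ m-i` on
`H_i ≅ K^{n-1}`, then `E` imposes independent conditions on polynomials of degree
`≤ m-1` in `n` variables: the vanishing space has dimension `C(m+n-1, n) - #E`. -/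
theorem parallel_hyperplanes_impose_independent_conditions {K : Type*} [Field K] [CharZero K]
    (n m : ℕ) (hn : 2 ≤ n) (hm : 1 ≤ m)
    (ℓ : ((Fin n → K) →ₗ[K] K)) (hℓ : ℓ ≠ 0)
    (c : Fin m → K) (hc : Function.Injective c)
    (φ : Fin m → ((Fin (n - 1) → K) →ᵃ[K] (Fin n → K)))
    (hφinj : ∀ i, Function.Injective (φ i))
    (hφmem : ∀ i y, ℓ (φ i y) = c i)
    (hφsurj : ∀ i x, ℓ x = c i → ∃ y, φ i y = x)
    (E : Finset (Fin n → K))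
    (hE : ∀ x ∈ E, ∃ i : Fin m, ℓ x = c i)
    (hcard : ∀ i : Fin m, (E.filter (fun x => ℓ x = c i)).card ≤
      (m - ((i : ℕ) + 1) + n - 2).choose (n - 2))
    (hind : ∀ i : Fin m,
      Module.finrank K ↥(vanishSpace K (n - 1) (m - ((i : ℕ) + 1))
          {y : Fin (n - 1) → K | φ i y ∈ E}) =
        (m - ((i : ℕ) + 1) + n - 1).choose (n - 1) -
          (E.filter (fun x => ℓ x = c i)).card) :
    Module.finrank K ↥(vanishSpace K n (m - 1) (E : Set (Fin n → K))) =
      (m + n - 1).choose n - E.card :=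
  parallel_hyperplanes_impose_independent_conditions_general n m hn hm ℓ c hc φ hφinj hφmem hφsurj E
    hE hcard hind
end
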